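/- arXiv:1411.4298 — 7 statements merged into one kernel-verified Lean document; each statement's English description precedes it below -/
import Mathlib

section
/- For the operator L₀ defined by (L₀v)(x) = -(x+1)v(x+1) + (2x+1)v(x) - x v(x-1) (with (L₀v)(0) = -v(1)+v(0)) acting on finitely supported sequences, one has ‖L₀ᵏ v‖₂ ≤ 4ᵏ (x_v!)⁻¹ (k + x_v)! ‖v‖₁ for all k ∈ ℤ₊, where x_v is the largest index of a nonzero component of v. -/
/-- The half-lattice Jacobi operator `L₀`. -/
noncomputable def L0 (v : ℕ → ℂ) : ℕ → ℂ := fun x =>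
  -((x : ℂ) + 1) * v (x + 1) + (2 * (x : ℂ) + 1) * v x - (x : ℂ) * v (x - 1)

lemma L0_supp (w : ℕ → ℂ) (n : ℕ) (h : ∀ x, n < x → w x = 0) :
    ∀ x, n + 1 < x → L0 w x = 0 := by
  intro x hx
  have h1 : w (x + 1) = 0 := h _ (by omega)
  have h2 : w x = 0 := h _ (by omega)
  have h3 : w (x - 1) = 0 := h _ (by omega)
  simp [L0, h1, h2, h3]

lemma iter_supp (v : ℕ → ℂ) (N : ℕ) (hsupp : ∀ x, v x ≠ 0 → x ≤ N) :
    ∀ k x, N + k < x → (L0^[k] v) x = 0 := by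
  intro k
  induction k with
  | zero =>
    intro x hx
    by_contra h
    exact absurd (hsupp x (by simpa using h)) (by omega)
  | succ k ih =>
    intro x hx
    rw [Function.iterate_succ_apply']
    exact L0_supp _ (N + k) ih x (by omega)

lemma L0_pointwise (w : ℕ → ℂ) (x : ℕ) :
    ‖L0 w x‖ ≤ ((x : ℝ) + 1) * ‖w (x + 1)‖ + (2 * (x : ℝ) + 1) * ‖w x‖
      + (x : ℝ) * ‖w (x - 1)‖ := by
  have hx : ‖((x : ℂ))‖ = (x : ℝ) := Complex.norm_natCast x
  have hx1 : ‖((x : ℂ) + 1)‖ = (x : ℝ) + 1 := by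
    have : ((x : ℂ) + 1) = ((x + 1 : ℕ) : ℂ) := by push_cast; ring
    rw [this, Complex.norm_natCast]; push_cast; ring
  have hx2 : ‖(2 * (x : ℂ) + 1)‖ = 2 * (x : ℝ) + 1 := by
    have : (2 * (x : ℂ) + 1) = ((2 * x + 1 : ℕ) : ℂ) := by push_cast; ring
    rw [this, Complex.norm_natCast]; push_cast; ring
  calc ‖L0 w x‖ ≤ ‖-((x : ℂ) + 1) * w (x + 1) + (2 * (x : ℂ) + 1) * w x‖
        + ‖(x : ℂ) * w (x - 1)‖ := norm_sub_le _ _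
    _ ≤ (‖-((x : ℂ) + 1) * w (x + 1)‖ + ‖(2 * (x : ℂ) + 1) * w x‖)
        + ‖(x : ℂ) * w (x - 1)‖ := by gcongr; exact norm_add_le _ _
    _ = ((x : ℝ) + 1) * ‖w (x + 1)‖ + (2 * (x : ℝ) + 1) * ‖w x‖
        + (x : ℝ) * ‖w (x - 1)‖ := by
      rw [norm_mul, norm_mul, norm_mul, norm_neg, hx, hx1, hx2]

lemma L0_l1_step (w : ℕ → ℂ) (n : ℕ) (h : ∀ x, n < x → w x = 0) :
    ∑ x ∈ Finset.range (n + 2), ‖L0 w x‖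
      ≤ 4 * ((n : ℝ) + 1) * ∑ x ∈ Finset.range (n + 1), ‖w x‖ := by
  set S := ∑ x ∈ Finset.range (n + 1), ‖w x‖ with hS
  have hSnn : 0 ≤ S := Finset.sum_nonneg fun _ _ => norm_nonneg _
  have step1 : ∑ x ∈ Finset.range (n + 2), ‖L0 w x‖
      ≤ ∑ x ∈ Finset.range (n + 2), (((x : ℝ) + 1) * ‖w (x + 1)‖
        + (2 * (x : ℝ) + 1) * ‖w x‖ + (x : ℝ) * ‖w (x - 1)‖) :=
    Finset.sum_le_sum fun x _ => L0_pointwise w x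
  rw [Finset.sum_add_distrib, Finset.sum_add_distrib] at step1
  -- term A
  have hA : ∑ x ∈ Finset.range (n + 2), ((x : ℝ) + 1) * ‖w (x + 1)‖
      ≤ (n : ℝ) * S := by
    have e1 : ∑ x ∈ Finset.range (n + 3), (x : ℝ) * ‖w x‖
        = ∑ x ∈ Finset.range (n + 2), (((x : ℝ) + 1) * ‖w (x + 1)‖) + 0 := by
      rw [Finset.sum_range_succ' (fun x => (x : ℝ) * ‖w x‖) (n + 2)]
      push_cast; simp
    have e2 : ∑ x ∈ Finset.range (n + 3), (x : ℝ) * ‖w x‖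
        = ∑ x ∈ Finset.range (n + 1), (x : ℝ) * ‖w x‖ := by
      rw [Finset.sum_range_succ, Finset.sum_range_succ, h (n + 1) (by omega),
        h (n + 2) (by omega)]
      simp
    have e3 : ∑ x ∈ Finset.range (n + 1), (x : ℝ) * ‖w x‖ ≤ (n : ℝ) * S := by
      rw [hS, Finset.mul_sum]
      refine Finset.sum_le_sum fun x hx => ?_
      have : (x : ℝ) ≤ (n : ℝ) := by
        exact_mod_cast Nat.le_of_lt_succ (Finset.mem_range.mp hx)
      exact mul_le_mul_of_nonneg_right this (norm_nonneg _)
    calc ∑ x ∈ Finset.range (n + 2), ((x : ℝ) + 1) * ‖w (x + 1)‖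
        = ∑ x ∈ Finset.range (n + 3), (x : ℝ) * ‖w x‖ := by rw [e1]; ring
      _ ≤ (n : ℝ) * S := e2 ▸ e3
  -- term B
  have hB : ∑ x ∈ Finset.range (n + 2), (2 * (x : ℝ) + 1) * ‖w x‖
      ≤ (2 * (n : ℝ) + 1) * S := by
    rw [Finset.sum_range_succ, h (n + 1) (by omega)]
    simp only [norm_zero, mul_zero, add_zero]
    rw [hS, Finset.mul_sum]
    refine Finset.sum_le_sum fun x hx => ?_
    have : (x : ℝ) ≤ (n : ℝ) := by
      exact_mod_cast Nat.le_of_lt_succ (Finset.mem_range.mp hx)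
    have h2 : 2 * (x : ℝ) + 1 ≤ 2 * (n : ℝ) + 1 := by linarith
    exact mul_le_mul_of_nonneg_right h2 (norm_nonneg _)
  -- term C
  have hC : ∑ x ∈ Finset.range (n + 2), (x : ℝ) * ‖w (x - 1)‖
      ≤ ((n : ℝ) + 1) * S := by
    rw [Finset.sum_range_succ' (fun x => (x : ℝ) * ‖w (x - 1)‖) (n + 1)]
    simp only [Nat.cast_zero, zero_mul, add_zero, Nat.add_sub_cancel]
    push_cast
    rw [hS, Finset.mul_sum]
    refine Finset.sum_le_sum fun x hx => ?_
    have : (x : ℝ) + 1 ≤ (n : ℝ) + 1 := by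
      have : (x : ℝ) ≤ (n : ℝ) := by
        exact_mod_cast Nat.le_of_lt_succ (Finset.mem_range.mp hx)
      linarith
    exact mul_le_mul_of_nonneg_right this (norm_nonneg _)
  calc ∑ x ∈ Finset.range (n + 2), ‖L0 w x‖
      ≤ _ := step1
    _ ≤ (n : ℝ) * S + (2 * (n : ℝ) + 1) * S + ((n : ℝ) + 1) * S := by
        exact add_le_add (add_le_add hA hB) hC
    _ ≤ 4 * ((n : ℝ) + 1) * S := by nlinarith

lemma l1_bound (v : ℕ → ℂ) (N : ℕ) (hsupp : ∀ x, v x ≠ 0 → x ≤ N) (k : ℕ) :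
    ∑ x ∈ Finset.range (N + k + 1), ‖(L0^[k] v) x‖
      ≤ 4 ^ k * ((N.factorial : ℝ))⁻¹ * ((k + N).factorial : ℝ)
        * ∑ x ∈ Finset.range (N + 1), ‖v x‖ := by
  have hfac : (0 : ℝ) < (N.factorial : ℝ) := by
    exact_mod_cast Nat.factorial_pos N
  induction k with
  | zero =>
    simp only [Function.iterate_zero, id_eq, pow_zero, one_mul, zero_add,
      Nat.add_zero]
    rw [inv_mul_cancel₀ (ne_of_gt hfac), one_mul]
  | succ k ih =>
    have hstep := L0_l1_step (L0^[k] v) (N + k)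
      (fun x hx => iter_supp v N hsupp k x hx)
    rw [← Function.iterate_succ_apply' L0 k v] at hstep
    have heq : N + (k + 1) + 1 = (N + k) + 2 := by omega
    rw [heq]
    refine le_trans hstep ?_
    have hSv : 0 ≤ ∑ x ∈ Finset.range (N + 1), ‖v x‖ :=
      Finset.sum_nonneg fun _ _ => norm_nonneg _
    have h2 : 4 * ((N : ℝ) + (k : ℝ) + 1)
        * (4 ^ k * ((N.factorial : ℝ))⁻¹ * ((k + N).factorial : ℝ)
          * ∑ x ∈ Finset.range (N + 1), ‖v x‖)
        = 4 ^ (k + 1) * ((N.factorial : ℝ))⁻¹ * (((k + N) + 1).factorial : ℝ)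
          * ∑ x ∈ Finset.range (N + 1), ‖v x‖ := by
      rw [Nat.factorial_succ]
      push_cast
      ring
    calc 4 * (((N + k : ℕ) : ℝ) + 1) * ∑ x ∈ Finset.range (N + k + 1), ‖(L0^[k] v) x‖
        ≤ 4 * (((N + k : ℕ) : ℝ) + 1)
          * (4 ^ k * ((N.factorial : ℝ))⁻¹ * ((k + N).factorial : ℝ)
            * ∑ x ∈ Finset.range (N + 1), ‖v x‖) := by
          apply mul_le_mul_of_nonneg_left ih
          positivity
      _ = 4 ^ (k + 1) * ((N.factorial : ℝ))⁻¹ * ((k + 1 + N).factorial : ℝ)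
          * ∑ x ∈ Finset.range (N + 1), ‖v x‖ := by
          push_cast at h2 ⊢
          rw [show k + 1 + N = (k + N) + 1 by omega]
          push_cast
          linarith [h2]

theorem stmt1 (v : ℕ → ℂ) (N : ℕ) (hN : v N ≠ 0)
    (hsupp : ∀ x, v x ≠ 0 → x ≤ N) (k : ℕ) :
    Real.sqrt (∑' x, ‖(L0^[k] v) x‖ ^ 2) ≤
      4 ^ k * ((N.factorial : ℝ))⁻¹ * ((k + N).factorial : ℝ) * ∑' x, ‖v x‖ := by
  have hw : ∀ x ∉ Finset.range (N + k + 1), ‖(L0^[k] v) x‖ ^ 2 = 0 := by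
    intro x hx
    have hxk : N + k < x := by
      simp only [Finset.mem_range, not_lt] at hx; omega
    rw [iter_supp v N hsupp k x hxk]; simp
  have hw' : ∀ x ∉ Finset.range (N + k + 1), ‖(L0^[k] v) x‖ ^ 2 = 0 := hw
  have hv : ∀ x ∉ Finset.range (N + 1), ‖v x‖ = 0 := by
    intro x hx
    have hxN : N < x := by
      simp only [Finset.mem_range, not_lt] at hx; omega
    have : v x = 0 := by
      by_contra h
      exact absurd (hsupp x h) (by omega)
    simp [this]
  rw [tsum_eq_sum hw, tsum_eq_sum hv]
  have hsq : ∑ x ∈ Finset.range (N + k + 1), ‖(L0^[k] v) x‖ ^ 2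
      ≤ (∑ x ∈ Finset.range (N + k + 1), ‖(L0^[k] v) x‖) ^ 2 :=
    Finset.sum_sq_le_sq_sum_of_nonneg fun _ _ => norm_nonneg _
  calc Real.sqrt (∑ x ∈ Finset.range (N + k + 1), ‖(L0^[k] v) x‖ ^ 2)
      ≤ Real.sqrt ((∑ x ∈ Finset.range (N + k + 1), ‖(L0^[k] v) x‖) ^ 2) :=
        Real.sqrt_le_sqrt hsq
    _ = ∑ x ∈ Finset.range (N + k + 1), ‖(L0^[k] v) x‖ :=
        Real.sqrt_sq (Finset.sum_nonneg fun _ _ => norm_nonneg _)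
    _ ≤ _ := l1_bound v N hsupp k
end

section
/- Every finitely supported sequence v on ℤ₊ is a semi-analytic vector for L₀: there exists a constant c_v > 0 (one may take c_v = 11‖v‖₁) such that ‖L₀ᵏ v‖₂ ≤ c_v (2k)! for all k ∈ ℤ₊. -/
/-!
`L₀` moves the support of a sequence up by at most one site, and on sequences supported in
`[0, n]` it enlarges the sup norm by a factor at most `6 (n + 1)`. Hence if `v` lives on `[0, N]`,
then `L₀ᵏ v` lives on `[0, N + k]` with entries at most `6ᵏ (N + k)! ‖v‖∞`, so its `ℓ²` norm is at
most `6ᵏ (N + k + 1)! ‖v‖∞`; and `aᵏ (k + N)!` is `O((2k)!)` because `(2k)!` contains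
`(k + N)!` times `k - N` further factors exceeding `a` once `k` is large.
-/

open Function Set Nat

theorem pow_mul_factorial_add_le (a N k : ℕ) :
    a ^ k * (k + N)! ≤ (a + 1) ^ (N + a) * (2 * N + a)! * (2 * k)! := by
  rcases le_or_gt k (N + a) with hk | hk
  · calc a ^ k * (k + N)! ≤ (a + 1) ^ (N + a) * (2 * N + a)! := by
          refine Nat.mul_le_mul ?_ (factorial_le (by omega))
          exact (Nat.pow_le_pow_left a.le_succ k).trans (Nat.pow_le_pow_right a.succ_pos hk)
      _ ≤ _ := Nat.le_mul_of_pos_right _ (factorial_pos _)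
  · have hfac : (k + N)! * (k + N + 1) ^ (k - N) ≤ (2 * k)! := by
      simpa [show k + N + (k - N) = 2 * k by omega] using
        factorial_mul_pow_le_factorial (m := k + N) (n := k - N)
    calc a ^ k * (k + N)! = a ^ N * ((k + N)! * a ^ (k - N)) := by
          rw [mul_comm ((k + N)!), ← mul_assoc, ← pow_add, Nat.add_sub_cancel' (by omega)]
      _ ≤ a ^ N * (2 * k)! := by
          gcongr
          exact le_trans (Nat.mul_le_mul_left _ (Nat.pow_le_pow_left (by omega) _)) hfac
      _ ≤ _ := by
          gcongr
          calc a ^ N ≤ (a + 1) ^ (N + a) :=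
                (Nat.pow_le_pow_left a.le_succ N).trans (Nat.pow_le_pow_right a.succ_pos (by omega))
            _ ≤ (a + 1) ^ (N + a) * (2 * N + a)! := Nat.le_mul_of_pos_right _ (factorial_pos _)

theorem support_L0_subset {u : ℕ → ℂ} {n : ℕ} (hu : support u ⊆ Iic n) :
    support (L0 u) ⊆ Iic (n + 1) := by
  intro x hx
  by_contra hxn
  have hzero : ∀ y, n < y → u y = 0 := fun y hy => notMem_support.mp fun h => by
    simpa using (hu h).trans_lt hy
  simp only [mem_Iic, not_le] at hxn
  apply hx
  simp [L0, hzero (x + 1) (by omega), hzero x (by omega), hzero (x - 1) (by omega)]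

theorem norm_L0_apply_le {u : ℕ → ℂ} {B : ℝ} (hB : ∀ y, ‖u y‖ ≤ B) (x : ℕ) :
    ‖L0 u x‖ ≤ (4 * x + 2) * B := by
  have hB0 : 0 ≤ B := (norm_nonneg _).trans (hB 0)
  have h1 : ‖(x : ℂ) + 1‖ ≤ x + 1 := by simpa using norm_add_le (x : ℂ) 1
  have h2 : ‖2 * (x : ℂ) + 1‖ ≤ 2 * x + 1 := by simpa using norm_add_le (2 * (x : ℂ)) 1
  calc ‖L0 u x‖
      ≤ ‖(x : ℂ) + 1‖ * ‖u (x + 1)‖ + ‖2 * (x : ℂ) + 1‖ * ‖u x‖ + ‖(x : ℂ)‖ * ‖u (x - 1)‖ := by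
        refine (norm_sub_le _ _).trans (add_le_add (norm_add_le _ _) le_rfl) |>.trans_eq ?_
        simp only [norm_mul, norm_neg]
    _ ≤ (x + 1) * B + (2 * x + 1) * B + x * B := by
        simp only [Complex.norm_natCast]
        gcongr <;> exact hB _
    _ = (4 * x + 2) * B := by ring

theorem norm_L0_apply_le_of_support_subset {u : ℕ → ℂ} {n : ℕ} {B : ℝ}
    (hu : support u ⊆ Iic n) (hB : ∀ y, ‖u y‖ ≤ B) (x : ℕ) :
    ‖L0 u x‖ ≤ 6 * (n + 1) * B := by
  have hB0 : 0 ≤ B := (norm_nonneg _).trans (hB 0)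
  by_cases hx : x ≤ n + 1
  · refine (norm_L0_apply_le hB x).trans (mul_le_mul_of_nonneg_right ?_ hB0)
    have : (x : ℝ) ≤ n + 1 := by exact_mod_cast hx
    linarith
  · rw [notMem_support.mp fun h => hx (support_L0_subset hu h), norm_zero]
    positivity

theorem support_iterate_L0_subset {v : ℕ → ℂ} {N : ℕ} (hv : support v ⊆ Iic N) (k : ℕ) :
    support (L0^[k] v) ⊆ Iic (N + k) := by
  induction k with
  | zero => simpa using hv
  | succ k ih => simpa [iterate_succ_apply', ← add_assoc] using support_L0_subset ih

theorem norm_iterate_L0_apply_le {v : ℕ → ℂ} {N : ℕ} {B : ℝ} (hv : support v ⊆ Iic N)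
    (hB : ∀ y, ‖v y‖ ≤ B) (k x : ℕ) :
    ‖(L0^[k] v) x‖ ≤ 6 ^ k * (N + k)! * B := by
  have hB0 : 0 ≤ B := (norm_nonneg _).trans (hB 0)
  induction k generalizing x with
  | zero =>
      simpa using (hB x).trans (le_mul_of_one_le_left hB0 (by exact_mod_cast N.factorial_pos))
  | succ k ih =>
      rw [iterate_succ_apply']
      refine (norm_L0_apply_le_of_support_subset (support_iterate_L0_subset hv k) ih x).trans_eq ?_
      rw [← add_assoc, factorial_succ]
      push_cast
      ring

theorem sqrt_tsum_norm_sq_le {w : ℕ → ℂ} {n : ℕ} {B : ℝ} (hw : support w ⊆ Iic n)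
    (hB : ∀ x, ‖w x‖ ≤ B) :
    √(∑' x, ‖w x‖ ^ 2) ≤ √(n + 1) * B := by
  have hB0 : 0 ≤ B := (norm_nonneg _).trans (hB 0)
  have hsum : ∑' x, ‖w x‖ ^ 2 = ∑ x ∈ Finset.range (n + 1), ‖w x‖ ^ 2 := by
    refine tsum_eq_sum fun x hx => ?_
    have : w x = 0 := notMem_support.mp fun h => hx (by simpa [Nat.lt_succ_iff] using hw h)
    simp [this]
  rw [hsum, ← Real.sqrt_sq hB0, ← Real.sqrt_mul (by positivity)]
  gcongr
  calc ∑ x ∈ Finset.range (n + 1), ‖w x‖ ^ 2 ≤ ∑ _x ∈ Finset.range (n + 1), B ^ 2 :=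
        Finset.sum_le_sum fun x _ => pow_le_pow_left₀ (norm_nonneg _) (hB x) 2
    _ = (n + 1) * B ^ 2 := by simp

theorem sqrt_tsum_norm_iterate_L0_sq_le {v : ℕ → ℂ} {N : ℕ} {B : ℝ} (hv : support v ⊆ Iic N)
    (hB : ∀ y, ‖v y‖ ≤ B) (k : ℕ) :
    √(∑' x, ‖(L0^[k] v) x‖ ^ 2) ≤ 6 ^ k * (k + (N + 1))! * B := by
  have hB0 : 0 ≤ B := (norm_nonneg _).trans (hB 0)
  have hsqrt : √((N + k : ℕ) + 1 : ℝ) ≤ (N + k : ℕ) + 1 :=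
    Real.sqrt_le_self_iff.mpr (Or.inr (by simp [add_nonneg]))
  calc √(∑' x, ‖(L0^[k] v) x‖ ^ 2) ≤ √((N + k : ℕ) + 1 : ℝ) * (6 ^ k * (N + k)! * B) :=
        sqrt_tsum_norm_sq_le (support_iterate_L0_subset hv k) (norm_iterate_L0_apply_le hv hB k)
    _ ≤ ((N + k : ℕ) + 1) * (6 ^ k * (N + k)! * B) := by gcongr
    _ = 6 ^ k * (k + (N + 1))! * B := by
        rw [show k + (N + 1) = N + k + 1 by omega, factorial_succ]
        push_cast
        ring

/-- Every finitely supported sequence is a semi-analytic vector for `L₀`: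
`‖L₀ᵏ v‖₂ ≤ c_v (2k)!` for some `c_v > 0` and all `k`. -/
theorem stmt2 (v : ℕ → ℂ) (hfin : (Function.support v).Finite) :
    ∃ c : ℝ, 0 < c ∧ ∀ k : ℕ,
      Real.sqrt (∑' x, ‖(L0^[k] v) x‖ ^ 2) ≤ c * ((2 * k).factorial : ℝ) := by
  obtain ⟨N, hN⟩ := hfin.bddAbove
  set B := ∑ x ∈ hfin.toFinset, ‖v x‖
  have hB : ∀ y, ‖v y‖ ≤ B := fun y => by
    by_cases hy : v y = 0
    · simpa [hy] using Finset.sum_nonneg fun x _ => norm_nonneg (v x)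
    · exact Finset.single_le_sum (fun x _ => norm_nonneg (v x)) (by simpa using hy)
  set C := (6 + 1) ^ (N + 1 + 6) * (2 * (N + 1) + 6)!
  refine ⟨C * (B + 1), by positivity, fun k => ?_⟩
  calc √(∑' x, ‖(L0^[k] v) x‖ ^ 2) ≤ 6 ^ k * (k + (N + 1))! * B :=
        sqrt_tsum_norm_iterate_L0_sq_le (fun x hx => hN hx) hB k
    _ ≤ C * (2 * k)! * (B + 1) :=
        mul_le_mul (by exact_mod_cast pow_mul_factorial_add_le 6 (N + 1) k) (by linarith)
          ((norm_nonneg _).trans (hB 0)) (by positivity)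
    _ = C * (B + 1) * (2 * k)! := by ring
end

section
/- Let 𝒯 be the binomial transform on sequences, (𝒯v)(k) = ∑ₓ (-1)ˣ C(k,x) v(x). Then for every sequence v and every k ∈ ℤ₊, (𝒯(L₀v))(k) = (k+1)(𝒯v)(k+1), where L₀ acts by (L₀v)(x) = -(x+1)v(x+1) + (2x+1)v(x) - x v(x-1) for x > 0 and (L₀v)(0) = -v(1) + v(0). -/
/-- The binomial transform `(𝒯v)(k) = ∑_{x=0}^{k} (-1)ˣ C(k,x) v(x)`. -/
noncomputable def binomT (v : ℕ → ℂ) (k : ℕ) : ℂ :=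
  ∑ x ∈ Finset.range (k + 1), (-1) ^ x * (k.choose x : ℂ) * v x

lemma keyNat (k y : ℕ) : (k+1) * (k+1).choose y =
    y * k.choose (y-1) + (2*y+1) * k.choose y + (y+1) * k.choose (y+1) := by
  cases y with
  | zero => simp [Nat.choose_one_right]; ring
  | succ z =>
    have h1 := Nat.add_one_mul_choose_eq k z
    have h2 := Nat.add_one_mul_choose_eq k (z+1)
    rw [Nat.choose_succ_succ] at h1 h2
    rw [Nat.choose_succ_succ]
    simp only [Nat.succ_sub_one]
    zify at h1 h2 ⊢
    linear_combination h1 + h2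

theorem stmt3 (v : ℕ → ℂ) (k : ℕ) :
    binomT (L0 v) k = ((k : ℂ) + 1) * binomT v (k + 1) := by
  have key : ∀ y : ℕ, ((k:ℂ)+1) * ((k+1).choose y : ℂ) =
      (y:ℂ) * (k.choose (y-1):ℂ) + (2*(y:ℂ)+1) * (k.choose y:ℂ)
        + ((y:ℂ)+1) * (k.choose (y+1):ℂ) := by
    intro y
    exact_mod_cast keyNat k y
  have hT1 : (∑ y ∈ Finset.range (k+2), (-1:ℂ)^y * ((y:ℂ) * (k.choose (y-1):ℂ)) * v y)
      = ∑ x ∈ Finset.range (k+1), (-1:ℂ)^x * (k.choose x : ℂ) * (-((x:ℂ)+1) * v (x+1)) := by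
    rw [Finset.sum_range_succ']
    simp only [Nat.cast_zero, Nat.cast_add, Nat.cast_one, Nat.succ_sub_one, pow_zero,
      zero_mul, mul_zero, add_zero]
    apply Finset.sum_congr rfl
    intro x _
    ring
  have hT2 : (∑ y ∈ Finset.range (k+2), (-1:ℂ)^y * ((2*(y:ℂ)+1) * (k.choose y:ℂ)) * v y)
      = ∑ x ∈ Finset.range (k+1), (-1:ℂ)^x * (k.choose x : ℂ) * ((2*(x:ℂ)+1) * v x) := by
    rw [Finset.sum_range_succ, Nat.choose_succ_self]
    simp only [Nat.cast_zero, mul_zero, zero_mul, add_zero]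
    apply Finset.sum_congr rfl
    intro x _
    ring
  have hT3 : (∑ y ∈ Finset.range (k+2), (-1:ℂ)^y * (((y:ℂ)+1) * (k.choose (y+1):ℂ)) * v y)
      = ∑ x ∈ Finset.range (k+1), (-1:ℂ)^x * (k.choose x : ℂ) * (-(x:ℂ) * v (x-1)) := by
    rw [Finset.sum_range_succ, Finset.sum_range_succ, Nat.choose_succ_self]
    have hk2 : k.choose (k+1+1) = 0 := Nat.choose_eq_zero_of_lt (by omega)
    rw [hk2]
    simp only [Nat.cast_zero, mul_zero, zero_mul, add_zero]
    rw [Finset.sum_range_succ' (fun x => (-1:ℂ)^x * (k.choose x : ℂ) * (-(x:ℂ) * v (x-1))) k]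
    simp only [Nat.cast_zero, neg_zero, zero_mul, mul_zero, add_zero, Nat.succ_sub_one]
    apply Finset.sum_congr rfl
    intro x _
    push_cast
    ring
  unfold binomT L0
  rw [Finset.mul_sum]
  have hR : (∑ y ∈ Finset.range (k+1+1), ((k:ℂ)+1) * ((-1)^y * ((k+1).choose y : ℂ) * v y))
      = (∑ y ∈ Finset.range (k+2), (-1:ℂ)^y * ((y:ℂ) * (k.choose (y-1):ℂ)) * v y)
        + (∑ y ∈ Finset.range (k+2), (-1:ℂ)^y * ((2*(y:ℂ)+1) * (k.choose y:ℂ)) * v y)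
        + (∑ y ∈ Finset.range (k+2), (-1:ℂ)^y * (((y:ℂ)+1) * (k.choose (y+1):ℂ)) * v y) := by
    rw [← Finset.sum_add_distrib, ← Finset.sum_add_distrib]
    apply Finset.sum_congr rfl
    intro y _
    have := key y
    linear_combination ((-1:ℂ)^y * v y) * this
  rw [hR, hT1, hT2, hT3, ← Finset.sum_add_distrib, ← Finset.sum_add_distrib]
  apply Finset.sum_congr rfl
  intro x _
  ring
end

section
/- The sequence u_k(x) := (-1)ˣ C(k,x) satisfies: (L₀u_k)(x) = (k+1)(-1)ˣ C(k+1,x) for all x, k ∈ ℤ₊, i.e. L₀ u_k = (k+1) u_{k+1}, where L₀ is the half-lattice Jacobi operator (L₀v)(x) = -(x+1)v(x+1) + (2x+1)v(x) - x v(x-1) for x > 0 and (L₀v)(0) = -v(1) + v(0). -/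
lemma Achoose (k x : ℕ) : ((x:ℂ)+1) * (k.choose (x+1) : ℂ) = ((k:ℂ)-x) * (k.choose x : ℂ) := by
  rcases le_or_gt x k with h | h
  · have h0 : ((k.choose (x+1) * (x+1) : ℕ) : ℂ) = ((k.choose x * (k - x) : ℕ) : ℂ) := by
      rw [Nat.choose_succ_right_eq]
    push_cast [Nat.cast_sub h] at h0
    linear_combination h0
  · rw [Nat.choose_eq_zero_of_lt h, Nat.choose_eq_zero_of_lt (by omega)]
    ring

theorem stmt4 (k x : ℕ) :
    L0 (fun y => (-1) ^ y * (k.choose y : ℂ)) x =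
      ((k : ℂ) + 1) * ((-1) ^ x * ((k + 1).choose x : ℂ)) := by
  cases x with
  | zero =>
      simp only [L0]
      norm_num [Nat.choose_one_right]
  | succ s =>
      have h1 := Achoose k (s+1)
      have h2 := Achoose k s
      have h3 : ((k+1).choose (s+1) : ℂ) = (k.choose (s+1) : ℂ) + (k.choose s : ℂ) := by
        rw [Nat.choose_succ_succ]; push_cast; ring
      simp only [L0, Nat.add_sub_cancel]
      push_cast [pow_succ] at *
      linear_combination (-(-1:ℂ)^s)*h1 - (-1:ℂ)^s*h2 + ((k:ℂ)+1)*(-1:ℂ)^s*h3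
end

section
/- The function g(a) := e^a E₁(a) = ∫_0^∞ e^{-t}(t+a)⁻¹ dt satisfies lim_{a→0⁺} g(a) = ∞ and lim_{a→∞} g(a) = 0; together with strict monotonicity, g maps (0,∞) bijectively onto (0,∞). Consequently, for every fixed q > 0 the equation q·e^a E₁(a) = 1 has exactly one solution a > 0. -/
open MeasureTheory Set Filter

/-!
The integrand `e^{-t}/(t + a)` is positive and strictly decreasing in `a`, and is dominated by
`e^{-t}/a`, so `g` is positive, strictly decreasing, continuous (dominated convergence) and
`g(a) ≤ 1/a`. Bounding `e^{-t} ≥ e^{-1}` on `(0, 1]` gives `g(a) ≥ e^{-1} log((1 + a)/a) → ∞`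
as `a → 0⁺`. The intermediate value theorem then makes `g` a bijection of `(0, ∞)`.
-/

/-- `g(a) = eᵃE₁(a) = ∫_0^∞ e^{-t}(t+a)⁻¹ dt`. -/
noncomputable def gFun (a : ℝ) : ℝ := ∫ t in Ioi (0 : ℝ), Real.exp (-t) / (t + a)

open Real Topology

theorem setIntegral_pos_of_forall_pos {X : Type*} [MeasurableSpace X] {μ : Measure X}
    {f : X → ℝ} {s : Set X} (hs : MeasurableSet s) (hμs : μ s ≠ 0) (hf : IntegrableOn f s μ)
    (hpos : ∀ x ∈ s, 0 < f x) : 0 < ∫ x in s, f x ∂μ := by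
  have hsupp : Function.support f ∩ s = s :=
    inter_eq_self_of_subset_right fun x hx => (hpos x hx).ne'
  rw [setIntegral_pos_iff_support_of_nonneg_ae
    (ae_restrict_of_forall_mem hs fun x hx => (hpos x hx).le) hf, hsupp, pos_iff_ne_zero]
  exact hμs

theorem integrableOn_exp_neg_div (b : ℝ) :
    IntegrableOn (fun t => exp (-t) / b) (Ioi 0) :=
  Integrable.div_const (integrableOn_exp_neg_Ioi 0) b

theorem integrableOn_exp_neg_div_add {a : ℝ} (ha : 0 < a) :
    IntegrableOn (fun t => exp (-t) / (t + a)) (Ioi 0) := by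
  refine (integrableOn_exp_neg_div a).mono' ?_ (ae_restrict_of_forall_mem measurableSet_Ioi ?_)
  · refine ContinuousOn.aestronglyMeasurable (fun t ht => ?_) measurableSet_Ioi
    have : t + a ≠ 0 := by linarith [mem_Ioi.1 ht]
    fun_prop (disch := exact this)
  · intro t (ht : 0 < t)
    rw [norm_of_nonneg (by positivity)]
    gcongr
    linarith

theorem gFun_pos {a : ℝ} (ha : 0 < a) : 0 < gFun a :=
  setIntegral_pos_of_forall_pos measurableSet_Ioi (by simp) (integrableOn_exp_neg_div_add ha)
    fun t (ht : 0 < t) => by positivity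

theorem gFun_le_inv {a : ℝ} (ha : 0 < a) : gFun a ≤ a⁻¹ := by
  calc gFun a ≤ ∫ t in Ioi (0 : ℝ), exp (-t) / a := by
        refine setIntegral_mono_on (integrableOn_exp_neg_div_add ha) (integrableOn_exp_neg_div a)
          measurableSet_Ioi fun t (ht : 0 < t) => ?_
        gcongr
        linarith
    _ = a⁻¹ := by rw [integral_div, integral_exp_neg_Ioi_zero, one_div]

theorem exp_neg_one_mul_log_le_gFun {a : ℝ} (ha : 0 < a) :
    exp (-1) * log ((1 + a) / a) ≤ gFun a := by
  have hcont : ContinuousOn (fun t => (t + a)⁻¹) (Icc 0 1) := fun t ht => by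
    have : t + a ≠ 0 := by linarith [ht.1]
    fun_prop (disch := exact this)
  calc exp (-1) * log ((1 + a) / a) = ∫ t in (0 : ℝ)..1, exp (-1) * (t + a)⁻¹ := by
        rw [intervalIntegral.integral_const_mul,
          intervalIntegral.integral_comp_add_right (fun t => t⁻¹), zero_add,
          integral_inv_of_pos ha (by linarith), add_comm]
    _ ≤ ∫ t in (0 : ℝ)..1, exp (-t) / (t + a) := by
        refine intervalIntegral.integral_mono_on zero_le_one
          ((hcont.const_mul _).intervalIntegrable_of_Icc zero_le_one)
          ((intervalIntegrable_iff_integrableOn_Ioc_of_le zero_le_one).2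
            ((integrableOn_exp_neg_div_add ha).mono_set Ioc_subset_Ioi_self)) fun t ht => ?_
        rw [div_eq_mul_inv]
        gcongr
        · exact inv_nonneg.2 (by linarith [ht.1])
        · exact ht.2
    _ ≤ gFun a := by
        rw [intervalIntegral.integral_of_le zero_le_one]
        exact setIntegral_mono_set (integrableOn_exp_neg_div_add ha)
          (ae_restrict_of_forall_mem measurableSet_Ioi fun t (ht : 0 < t) => by positivity)
          Ioc_subset_Ioi_self.eventuallyLE

theorem strictAntiOn_gFun : StrictAntiOn gFun (Ioi 0) := by
  intro a (ha : 0 < a) b (hb : 0 < b) hab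
  have hint_a := integrableOn_exp_neg_div_add ha
  have hint_b := integrableOn_exp_neg_div_add hb
  rw [← sub_pos, gFun, gFun, ← integral_sub hint_a hint_b]
  exact setIntegral_pos_of_forall_pos measurableSet_Ioi (by simp) (hint_a.sub hint_b)
    fun t (ht : 0 < t) =>
      sub_pos.2 <| div_lt_div_of_pos_left (exp_pos _) (by linarith) (by linarith)

theorem continuousOn_gFun : ContinuousOn gFun (Ioi 0) := by
  intro a (ha : 0 < a)
  have hnear : ∀ᶠ x in 𝓝 a, a / 2 < x := Ioi_mem_nhds (by linarith)
  refine (continuousAt_of_dominated (bound := fun t => exp (-t) / (a / 2)) ?_ ?_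
    (integrableOn_exp_neg_div _) ?_).continuousWithinAt
  · filter_upwards [hnear] with x hx
    exact (integrableOn_exp_neg_div_add (by linarith)).aestronglyMeasurable
  · filter_upwards [hnear] with x hx
    refine ae_restrict_of_forall_mem measurableSet_Ioi fun t (ht : 0 < t) => ?_
    rw [norm_of_nonneg (div_nonneg (exp_pos _).le (by linarith))]
    gcongr
    linarith
  · refine ae_restrict_of_forall_mem measurableSet_Ioi fun t (ht : 0 < t) => ?_
    have : t + a ≠ 0 := by linarith
    fun_prop (disch := exact this)

theorem tendsto_gFun_atTop : Tendsto gFun atTop (𝓝 0) := by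
  refine squeeze_zero' ?_ ?_ tendsto_inv_atTop_zero
  · filter_upwards [eventually_gt_atTop 0] with a ha using (gFun_pos ha).le
  · filter_upwards [eventually_gt_atTop 0] with a ha using gFun_le_inv ha

theorem tendsto_gFun_nhdsGT_zero : Tendsto gFun (𝓝[>] 0) atTop := by
  refine tendsto_atTop_mono' _ (eventually_nhdsWithin_of_forall fun a ha =>
    exp_neg_one_mul_log_le_gFun ha) (Tendsto.const_mul_atTop (exp_pos _) ?_)
  have h_one_add : Tendsto (fun a : ℝ => 1 + a) (𝓝[>] 0) (𝓝 1) :=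
    ((continuous_const_add 1).tendsto' 0 1 (add_zero 1)).mono_left nhdsWithin_le_nhds
  exact tendsto_log_atTop.comp (h_one_add.pos_mul_atTop one_pos tendsto_inv_nhdsGT_zero)

theorem bijOn_gFun : BijOn gFun (Ioi 0) (Ioi 0) :=
  ⟨fun _ => gFun_pos, strictAntiOn_gFun.injOn,
    isPreconnected_Ioi.intermediate_value_Ioi (l₂ := 𝓝[>] 0)
      (le_principal_iff.2 (Ioi_mem_atTop 0)) inf_le_right continuousOn_gFun tendsto_gFun_atTop
      tendsto_gFun_nhdsGT_zero⟩

/-- `g` blows up at `0⁺`, tends to `0` at `∞`, maps `(0,∞)` bijectively onto `(0,∞)`;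
consequently, for every `q > 0` the equation `q·g(a) = 1` has exactly one solution `a > 0`. -/
theorem stmt10 :
    Tendsto gFun (nhdsWithin 0 (Ioi 0)) atTop ∧
    Tendsto gFun atTop (nhds 0) ∧
    Set.BijOn gFun (Ioi 0) (Ioi 0) ∧
    ∀ q : ℝ, 0 < q → ∃! a : ℝ, 0 < a ∧ q * gFun a = 1 := by
  refine ⟨tendsto_gFun_nhdsGT_zero, tendsto_gFun_atTop, bijOn_gFun, fun q hq => ?_⟩
  obtain ⟨a, ha, hga⟩ := bijOn_gFun.surjOn (inv_pos.2 hq)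
  refine ⟨a, ⟨ha, by rw [hga, mul_inv_cancel₀ hq.ne']⟩, fun b ⟨hb, hgb⟩ => ?_⟩
  exact bijOn_gFun.injOn hb ha (by rw [hga, eq_inv_of_mul_eq_one_right hgb])
end

section
/- Fix λ ≥ 0, x ∈ ℤ₊, κ sufficiently large, and set ε = (x+κ)⁻¹, r = 1-ε. Then for every s on the circle |s| = r, writing ŝ = s/(1-s), one has |exp(-ŝλ)| ≤ exp(-ε̂λ) where ε̂ = -1/2 + ε/4. Equivalently, Re(s/(1-s)) ≥ -1/2 + ε/4 on the circle |s| = 1-ε for κ large. -/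
/-! With `r = ‖s‖ < 1` and `a = Re s`, clearing the denominator `‖1 - s‖² = 1 - 2a + r²` turns
`Re (s / (1 - s)) ≥ -r / (1 + r)` into `(1 - r) (a + r) ≥ 0`, so the minimum on the circle is
attained at `s = -r`. For `r = 1 - ε` this gives `-1/2 + ε / (2 (2 - ε)) ≥ -1/2 + ε / 4`, and the
bound on `‖exp (-ŝ λ)‖ = exp (-(Re ŝ) λ)` follows by monotonicity of `exp`. -/

open Complex

lemma neg_norm_div_one_add_norm_le_re_div_one_sub {s : ℂ} (hs : ‖s‖ < 1) :
    -(‖s‖ / (1 + ‖s‖)) ≤ (s / (1 - s)).re := by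
  have hs1 : 1 - s ≠ 0 := fun h => by
    simp [← sub_eq_zero.1 h] at hs
  have hnormSq : ‖s‖ ^ 2 = s.re ^ 2 + s.im ^ 2 := by
    rw [Complex.sq_norm, Complex.normSq_apply]; ring
  have hre : -‖s‖ ≤ s.re := neg_le_of_abs_le (Complex.abs_re_le_norm s)
  have hden : normSq (1 - s) = (1 - s.re) ^ 2 + s.im ^ 2 := by
    simp only [normSq_apply, sub_re, one_re, sub_im, one_im]; ring
  rw [div_re, ← add_div, le_div_iff₀ (normSq_pos.2 hs1), hden, ← neg_div,
    div_mul_eq_mul_div, div_le_iff₀ (by positivity)]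
  simp only [sub_re, one_re, sub_im, one_im]
  nlinarith [mul_nonneg (sub_nonneg.2 hs.le) (neg_le_iff_add_nonneg.1 hre)]

lemma norm_exp_neg_mul_ofReal_le {z : ℂ} {c l : ℝ} (hc : c ≤ z.re) (hl : 0 ≤ l) :
    ‖exp (-z * l)‖ ≤ Real.exp (-c * l) := by
  rw [norm_exp, Real.exp_le_exp]
  simpa [mul_re] using mul_le_mul_of_nonneg_right hc hl

/-- For `λ ≥ 0`, `x ∈ ℤ₊` and `κ` sufficiently large, on the circle
`|s| = 1 - ε`, `ε = (x+κ)⁻¹`, writing `ŝ = s/(1-s)` and `ε̂ = -1/2 + ε/4`,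
one has `Re ŝ ≥ ε̂` and consequently `|exp(-ŝλ)| ≤ exp(-ε̂λ)`. -/
theorem stmt16 (l : ℝ) (hl : 0 ≤ l) (x : ℕ) :
    ∃ κ₀ : ℝ, ∀ κ : ℝ, κ₀ ≤ κ → ∀ s : ℂ, ‖s‖ = 1 - ((x : ℝ) + κ)⁻¹ →
      (-(1 / 2) + ((x : ℝ) + κ)⁻¹ / 4 ≤ (s / (1 - s)).re ∧
       ‖Complex.exp (-(s / (1 - s)) * (l : ℂ))‖ ≤
         Real.exp (-(-(1 / 2) + ((x : ℝ) + κ)⁻¹ / 4) * l)) := by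
  refine ⟨1, fun κ hκ s hs => ?_⟩
  set ε := ((x : ℝ) + κ)⁻¹
  have hε : 0 < ε := inv_pos.2 (by positivity)
  have hε1 : ε ≤ 1 := inv_le_one_of_one_le₀ (by linarith [(Nat.cast_nonneg x : (0 : ℝ) ≤ x)])
  have hcircle : -(1 / 2) + ε / 4 ≤ -(‖s‖ / (1 + ‖s‖)) := by
    rw [hs, le_neg, div_le_iff₀ (by linarith)]
    nlinarith
  have hre := hcircle.trans (neg_norm_div_one_add_norm_le_re_div_one_sub (by linarith))
  exact ⟨hre, norm_exp_neg_mul_ofReal_le hre hl⟩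
end

section
/- Let A be a positive symmetric densely defined operator on a Hilbert space with finite equal deficiency indices [m,m], m ≥ 1. Then A admits more than one semibounded self-adjoint extension. Consequently, if a positive symmetric operator has a unique semibounded self-adjoint extension, it is essentially self-adjoint. -/
open scoped InnerProductSpace

/-- The deficiency space `ker(A* - c)` of a densely defined operator `A`. -/
noncomputable def deficiencySpace {H : Type*} [NormedAddCommGroup H]
    [InnerProductSpace ℂ H] [CompleteSpace H] (A : H →ₗ.[ℂ] H) (c : ℂ) :
    Submodule ℂ A.adjoint.domain :=
  LinearMap.ker (A.adjoint.toFun - c • A.adjoint.domain.subtype)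

/-- A semibounded self-adjoint extension of `A`. -/
def IsSemibddSAExt {H : Type*} [NormedAddCommGroup H]
    [InnerProductSpace ℂ H] [CompleteSpace H] (A S : H →ₗ.[ℂ] H) : Prop :=
  A ≤ S ∧ S.adjoint = S ∧
    ∃ c : ℝ, ∀ x : S.domain, c * ‖(x : H)‖ ^ 2 ≤ (inner ℂ (x : H) (S x) : ℂ).re

/-!
For a closed positive symmetric `T` and `t > 0`, the operator `T + t` is bounded below by `t`, so
its range is closed and `H = ran (T + t) ⊕ ker (T† + t)`. Extending `T` by `-t` on `ker (T† + t)`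
gives a self-adjoint extension bounded below by `-t`. For the closure `T` of `A` and `t = 1, 2`
these two extensions can only coincide if `ker (T† + 2) = 0`, since a `-2`-eigenvector would
violate the lower bound `-1`; but then the extension is `T` itself, so `T` is self-adjoint and the
deficiency spaces of `A` are trivial.
-/

theorem re_inner_self_eq_norm_sq {H : Type*} [NormedAddCommGroup H] [InnerProductSpace ℂ H]
    (x : H) : (⟪x, x⟫_ℂ).re = ‖x‖ ^ 2 :=
  inner_self_eq_norm_sq (𝕜 := ℂ) x

namespace LinearPMap

section Closure

variable {R E F : Type*} [CommRing R] [AddCommGroup E] [AddCommGroup F] [Module R E] [Module R F]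
  [TopologicalSpace E] [TopologicalSpace F] [ContinuousAdd E] [ContinuousAdd F]
  [TopologicalSpace R] [ContinuousSMul R E] [ContinuousSMul R F]

theorem IsClosable.closure_mem_of_isClosed {T : E →ₗ.[R] F} (hT : T.IsClosable)
    {C : Set (E × F)} (hC : _root_.IsClosed C) (h : ∀ x : T.domain, ((x : E), T x) ∈ C)
    (x : T.closure.domain) : ((x : E), T.closure x) ∈ C := by
  have hsub : (T.graph : Set (E × F)) ⊆ C := fun p hp => by
    obtain ⟨y, rfl⟩ := T.mem_graph_iff'.1 hp
    exact h y
  have hx := T.closure.mem_graph x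
  rw [← hT.graph_closure_eq_closure_graph, ← SetLike.mem_coe,
    Submodule.topologicalClosure_coe] at hx
  exact closure_minimal hsub hC hx

end Closure

section InnerProduct

variable {𝕜 E F : Type*} [RCLike 𝕜] [NormedAddCommGroup E] [InnerProductSpace 𝕜 E]
  [NormedAddCommGroup F] [InnerProductSpace 𝕜 F] {T : E →ₗ.[𝕜] F} {S : F →ₗ.[𝕜] E}

theorem IsFormalAdjoint.closure (hT : T.IsClosable) (h : T.IsFormalAdjoint S) :
    T.closure.IsFormalAdjoint S := fun x y =>
  hT.closure_mem_of_isClosed (C := {p | ⟪p.2, (y : F)⟫_𝕜 = ⟪p.1, S y⟫_𝕜})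
    (isClosed_eq (continuous_snd.inner continuous_const)
      (continuous_fst.inner continuous_const)) (fun x' => h x' y) x

theorem IsFormalAdjoint.isClosable [CompleteSpace F] (hS : Dense (S.domain : Set F))
    (h : T.IsFormalAdjoint S) : T.IsClosable :=
  (adjoint_isClosed hS).isClosable.leIsClosable (h.symm.le_adjoint hS)

theorem dense_closure_domain (hT : Dense (T.domain : Set E)) :
    Dense (T.closure.domain : Set E) :=
  hT.mono (le_closure T).1

theorem adjoint_le_adjoint_closure [CompleteSpace E] (hT : Dense (T.domain : Set E))
    (hcl : T.IsClosable) : T† ≤ T.closure† :=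
  ((adjoint_isFormalAdjoint hT).symm.closure hcl).le_adjoint (dense_closure_domain hT)

end InnerProduct

section Positive

variable {H : Type*} [NormedAddCommGroup H] [InnerProductSpace ℂ H] {T : H →ₗ.[ℂ] H} {t : ℝ}

noncomputable def shift (T : H →ₗ.[ℂ] H) (t : ℝ) : T.domain →ₗ[ℂ] H :=
  T.toFun + (t : ℂ) • T.domain.subtype

theorem shift_apply (x : T.domain) : T.shift t x = T x + (t : ℂ) • (x : H) := rfl

/-- The kernel of `T† + t`, described without the adjoint. -/
noncomputable def defectSpace (T : H →ₗ.[ℂ] H) (t : ℝ) : Submodule ℂ H :=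
  (LinearMap.range (T.shift t))ᗮ

theorem inner_shift_eq_zero {y : H} (hy : y ∈ T.defectSpace t) (x : T.domain) :
    ⟪T.shift t x, y⟫_ℂ = 0 :=
  (Submodule.mem_orthogonal _ y).1 hy _ ⟨x, rfl⟩

theorem mem_defectSpace_of_inner_shift_eq_zero {y : H}
    (h : ∀ x : T.domain, ⟪T.shift t x, y⟫_ℂ = 0) : y ∈ T.defectSpace t := by
  rintro _ ⟨x, rfl⟩
  exact h x

theorem inner_shift_left (hsym : T.IsFormalAdjoint T) (x y : T.domain) :
    ⟪T.shift t x, (y : H)⟫_ℂ = ⟪(x : H), T.shift t y⟫_ℂ := by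
  rw [shift_apply, shift_apply, inner_add_left, inner_add_right, inner_smul_left,
    inner_smul_right, Complex.conj_ofReal, hsym x y]

theorem mul_norm_sq_le_re_inner_shift (hpos : ∀ x : T.domain, 0 ≤ (⟪(x : H), T x⟫_ℂ).re)
    (x : T.domain) : t * ‖(x : H)‖ ^ 2 ≤ (⟪(x : H), T.shift t x⟫_ℂ).re := by
  rw [shift_apply, inner_add_right, inner_smul_right, Complex.add_re, Complex.re_ofReal_mul,
    re_inner_self_eq_norm_sq]
  linarith [hpos x]

theorem mul_norm_le_norm_shift (hpos : ∀ x : T.domain, 0 ≤ (⟪(x : H), T x⟫_ℂ).re)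
    (x : T.domain) : t * ‖(x : H)‖ ≤ ‖T.shift t x‖ := by
  rcases (norm_nonneg (x : H)).eq_or_lt with hx | hx
  · rw [← hx, mul_zero]
    exact norm_nonneg _
  · refine le_of_mul_le_mul_right ?_ hx
    calc t * ‖(x : H)‖ * ‖(x : H)‖ = t * ‖(x : H)‖ ^ 2 := by ring
      _ ≤ (⟪(x : H), T.shift t x⟫_ℂ).re := mul_norm_sq_le_re_inner_shift hpos x
      _ ≤ ‖(x : H)‖ * ‖T.shift t x‖ := re_inner_le_norm (𝕜 := ℂ) _ _
      _ = ‖T.shift t x‖ * ‖(x : H)‖ := mul_comm _ _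

theorem disjoint_domain_defectSpace (hpos : ∀ x : T.domain, 0 ≤ (⟪(x : H), T x⟫_ℂ).re)
    (ht : 0 < t) : Disjoint T.domain (T.defectSpace t) := by
  rw [Submodule.disjoint_def]
  intro x hx hxN
  have h := mul_norm_sq_le_re_inner_shift (t := t) hpos ⟨x, hx⟩
  rw [inner_eq_zero_symm.1 (inner_shift_eq_zero hxN _), Complex.zero_re] at h
  have hx0 : ‖x‖ ^ 2 ≤ 0 := nonpos_of_mul_nonpos_right h ht
  simpa using hx0

theorem isClosed_range_shift [CompleteSpace H] (hcl : T.IsClosed)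
    (hpos : ∀ x : T.domain, 0 ≤ (⟪(x : H), T x⟫_ℂ).re) (ht : 0 < t) :
    _root_.IsClosed (LinearMap.range (T.shift t) : Set H) := by
  have : CompleteSpace T.graph := IsClosed.completeSpace_coe (hs := hcl)
  let f : T.graph →L[ℂ] H :=
    (ContinuousLinearMap.snd ℂ H H + (t : ℂ) • ContinuousLinearMap.fst ℂ H H).comp
      T.graph.subtypeL
  have hf_graph : ∀ x : T.domain, f ⟨((x : H), T x), T.mem_graph x⟩ = T.shift t x :=
    fun _ => rfl
  have hrange : Set.range f = LinearMap.range (T.shift t) := by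
    ext z
    constructor
    · rintro ⟨⟨p, hp⟩, rfl⟩
      obtain ⟨x, rfl⟩ := T.mem_graph_iff'.1 hp
      exact ⟨x, (hf_graph x).symm⟩
    · rintro ⟨x, rfl⟩
      exact ⟨_, hf_graph x⟩
  -- `f` is antilipschitz on the complete space `T.graph`, so its range is closed
  have hbound : ∀ p, ‖p‖ ≤ (2 + t⁻¹ : ℝ) * ‖f p‖ := by
    rintro ⟨p, hp⟩
    obtain ⟨x, rfl⟩ := T.mem_graph_iff'.1 hp
    rw [hf_graph]
    have hx : t * ‖(x : H)‖ ≤ ‖T.shift t x‖ := mul_norm_le_norm_shift hpos x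
    have hTx : ‖T x‖ ≤ 2 * ‖T.shift t x‖ :=
      calc ‖T x‖ = ‖T.shift t x - (t : ℂ) • (x : H)‖ := by
            rw [shift_apply, add_sub_cancel_right]
        _ ≤ ‖T.shift t x‖ + ‖(t : ℂ) • (x : H)‖ := norm_sub_le _ _
        _ = ‖T.shift t x‖ + t * ‖(x : H)‖ := by
          rw [norm_smul, Complex.norm_real, Real.norm_of_nonneg ht.le]
        _ ≤ 2 * ‖T.shift t x‖ := by linarith
    have hx' : ‖(x : H)‖ ≤ t⁻¹ * ‖T.shift t x‖ := (le_inv_mul_iff₀ ht).2 hx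
    rw [Submodule.coe_norm, Prod.norm_def, max_le_iff]
    constructor <;> nlinarith [norm_nonneg (T.shift t x), inv_pos.2 ht]
  have hanti : AntilipschitzWith ⟨2 + t⁻¹, by positivity⟩ f :=
    f.antilipschitz_of_bound hbound
  rw [← hrange]
  exact hanti.isClosed_range f.uniformContinuous

theorem exists_eq_shift_add_mem_defectSpace [CompleteSpace H] (hcl : T.IsClosed)
    (hpos : ∀ x : T.domain, 0 ≤ (⟪(x : H), T x⟫_ℂ).re) (ht : 0 < t) (z : H) :
    ∃ x : T.domain, ∃ w ∈ T.defectSpace t, z = T.shift t x + w := by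
  have : CompleteSpace (LinearMap.range (T.shift t)) :=
    (isClosed_range_shift hcl hpos ht).completeSpace_coe
  obtain ⟨_, ⟨x, rfl⟩, w, hw, hz⟩ :=
    Submodule.exists_add_mem_mem_orthogonal (K := LinearMap.range (T.shift t)) z
  exact ⟨x, w, hw, hz⟩

/-- `T` on its domain and `-t` on `ker (T† + t)`: for `t > 0` this is the Krein–von Neumann
extension of `T + t`, shifted back by `-t`. -/
noncomputable def defectExtension (T : H →ₗ.[ℂ] H) (t : ℝ)
    (hd : Disjoint T.domain (T.defectSpace t)) : H →ₗ.[ℂ] H :=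
  T.sup ⟨T.defectSpace t, (-(t : ℂ)) • (T.defectSpace t).subtype⟩ (sup_h_of_disjoint _ _ hd)

variable {hd : Disjoint T.domain (T.defectSpace t)}

theorem le_defectExtension : T ≤ T.defectExtension t hd :=
  LinearPMap.left_le_sup _ _ _

theorem mem_defectExtension_domain (x : T.domain) {w : H} (hw : w ∈ T.defectSpace t) :
    (x : H) + w ∈ (T.defectExtension t hd).domain :=
  Submodule.mem_sup.2 ⟨x, x.2, w, hw, rfl⟩

theorem defectExtension_apply_add (x : T.domain) {w : H} (hw : w ∈ T.defectSpace t)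
    (z : (T.defectExtension t hd).domain) (hz : (x : H) + w = z) :
    T.defectExtension t hd z = T x - (t : ℂ) • w := by
  refine (sup_apply _ x ⟨w, hw⟩ z hz).trans ?_
  change T x + -(t : ℂ) • w = _
  rw [neg_smul, ← sub_eq_add_neg]

theorem exists_defectExtension_apply (z : (T.defectExtension t hd).domain) :
    ∃ x : T.domain, (z : H) - x ∈ T.defectSpace t ∧
      T.defectExtension t hd z = T.shift t x - (t : ℂ) • (z : H) := by
  obtain ⟨x, hx, w, hw, hz⟩ := Submodule.mem_sup.1 z.2
  refine ⟨⟨x, hx⟩, by rwa [← hz, add_sub_cancel_left], ?_⟩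
  rw [defectExtension_apply_add ⟨x, hx⟩ hw z hz, shift_apply, ← hz]
  module

theorem defectExtension_isFormalAdjoint (hsym : T.IsFormalAdjoint T) :
    (T.defectExtension t hd).IsFormalAdjoint (T.defectExtension t hd) := by
  intro u v
  obtain ⟨x, hxu, hSu⟩ := exists_defectExtension_apply u
  obtain ⟨y, hyv, hSv⟩ := exists_defectExtension_apply v
  have hxv := inner_shift_eq_zero hyv x
  have hyu := inner_eq_zero_symm.1 (inner_shift_eq_zero hxu y)
  rw [inner_sub_right] at hxv
  rw [inner_sub_left] at hyu
  rw [hSu, hSv, inner_sub_left, inner_sub_right, inner_smul_left, inner_smul_right,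
    Complex.conj_ofReal]
  linear_combination hxv - hyu + inner_shift_left hsym x y

theorem neg_mul_norm_sq_le_re_inner_defectExtension
    (hpos : ∀ x : T.domain, 0 ≤ (⟪(x : H), T x⟫_ℂ).re) (ht : 0 ≤ t)
    (z : (T.defectExtension t hd).domain) :
    -t * ‖(z : H)‖ ^ 2 ≤ (⟪(z : H), T.defectExtension t hd z⟫_ℂ).re := by
  obtain ⟨x, hxz, hSz⟩ := exists_defectExtension_apply z
  have hzx : ⟪(z : H), T.shift t x⟫_ℂ = ⟪(x : H), T.shift t x⟫_ℂ := by
    rw [← sub_eq_zero, ← inner_sub_left]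
    exact inner_eq_zero_symm.1 (inner_shift_eq_zero hxz x)
  rw [hSz, inner_sub_right, inner_smul_right, hzx, Complex.sub_re, Complex.re_ofReal_mul,
    re_inner_self_eq_norm_sq]
  nlinarith [mul_norm_sq_le_re_inner_shift (t := t) hpos x, sq_nonneg ‖(x : H)‖]

theorem dense_defectExtension_domain (hdense : Dense (T.domain : Set H)) :
    Dense ((T.defectExtension t hd).domain : Set H) :=
  hdense.mono le_defectExtension.1

theorem inner_adjoint_defectExtension_add_smul [CompleteSpace H]
    (hdense : Dense (T.domain : Set H)) (v : (T.defectExtension t hd)†.domain) (x : T.domain)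
    {w : H} (hw : w ∈ T.defectSpace t) :
    ⟪(T.defectExtension t hd)† v + (t : ℂ) • (v : H), (x : H) + w⟫_ℂ =
      ⟪(v : H), T.shift t x⟫_ℂ := by
  have h := adjoint_isFormalAdjoint (dense_defectExtension_domain (hd := hd) hdense) v
    ⟨_, mem_defectExtension_domain x hw⟩
  rw [defectExtension_apply_add x hw _ rfl] at h
  rw [inner_add_left, h, inner_smul_left, Complex.conj_ofReal, shift_apply]
  simp only [inner_add_right, inner_sub_right, inner_smul_right]
  ring

theorem adjoint_defectExtension [CompleteSpace H] (hdense : Dense (T.domain : Set H))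
    (hsym : T.IsFormalAdjoint T) (hcl : T.IsClosed)
    (hpos : ∀ x : T.domain, 0 ≤ (⟪(x : H), T x⟫_ℂ).re) (ht : 0 < t) :
    (T.defectExtension t hd)† = T.defectExtension t hd := by
  have hle : T.defectExtension t hd ≤ (T.defectExtension t hd)† :=
    (defectExtension_isFormalAdjoint hsym).le_adjoint (dense_defectExtension_domain hdense)
  refine (eq_of_le_of_domain_eq hle (le_antisymm hle.1 fun u hu => ?_)).symm
  have key := inner_adjoint_defectExtension_add_smul hdense ⟨u, hu⟩
  obtain ⟨y, w, hw, hdecomp⟩ := exists_eq_shift_add_mem_defectSpace hcl hpos ht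
    ((T.defectExtension t hd)† ⟨u, hu⟩ + (t : ℂ) • u)
  have hw0 : w = 0 := by
    have h := key 0 hw
    rw [hdecomp, Submodule.coe_zero, zero_add, inner_add_left, inner_shift_eq_zero hw,
      LinearMap.map_zero, inner_zero_right, zero_add] at h
    exact inner_self_eq_zero.1 h
  have huy : u - y ∈ T.defectSpace t := by
    refine mem_defectSpace_of_inner_shift_eq_zero fun x => ?_
    have h := key x (T.defectSpace t).zero_mem
    rw [hdecomp, hw0, add_zero, add_zero, inner_shift_left hsym] at h
    rw [inner_eq_zero_symm, inner_sub_left, ← h, sub_self]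
  rw [← add_sub_cancel (y : H) u]
  exact mem_defectExtension_domain y huy

theorem defectExtension_eq_self (h : T.defectSpace t = ⊥) : T.defectExtension t hd = T :=
  (eq_of_le_of_domain_eq le_defectExtension (by simp [defectExtension, domain_sup, h])).symm

theorem defectExtension_apply_of_mem_defectSpace {w : H} (hw : w ∈ T.defectSpace t)
    (z : (T.defectExtension t hd).domain) (hz : w = z) :
    T.defectExtension t hd z = -((t : ℂ) • w) := by
  rw [defectExtension_apply_add 0 hw z (by rw [Submodule.coe_zero, zero_add, hz]),
    LinearPMap.map_zero, zero_sub]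

theorem defectSpace_eq_bot_of_defectExtension_eq
    (hpos : ∀ x : T.domain, 0 ≤ (⟪(x : H), T x⟫_ℂ).re) {s : ℝ} (hs : 0 ≤ s) (hst : s < t)
    {hd' : Disjoint T.domain (T.defectSpace s)}
    (h : T.defectExtension s hd' = T.defectExtension t hd) : T.defectSpace t = ⊥ := by
  refine (Submodule.eq_bot_iff _).2 fun w hw => ?_
  have hwt : w ∈ (T.defectExtension t hd).domain := by
    simpa using mem_defectExtension_domain (hd := hd) 0 hw
  have hws : w ∈ (T.defectExtension s hd').domain := (le_of_eq h.symm).1 hwt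
  have hbound := neg_mul_norm_sq_le_re_inner_defectExtension hpos hs ⟨w, hws⟩
  rw [(le_of_eq h).2 (y := ⟨w, hwt⟩) rfl, defectExtension_apply_of_mem_defectSpace hw _ rfl,
    inner_neg_right, inner_smul_right, Complex.neg_re, Complex.re_ofReal_mul,
    re_inner_self_eq_norm_sq] at hbound
  have hw2 : ‖w‖ ^ 2 ≤ 0 := by nlinarith [sq_nonneg ‖w‖]
  simpa using hw2

theorem re_inner_closure_apply_nonneg (hcl : T.IsClosable)
    (hpos : ∀ x : T.domain, 0 ≤ (⟪(x : H), T x⟫_ℂ).re) (x : T.closure.domain) :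
    0 ≤ (⟪(x : H), T.closure x⟫_ℂ).re :=
  hcl.closure_mem_of_isClosed (C := {p | 0 ≤ (⟪p.1, p.2⟫_ℂ).re})
    (isClosed_le continuous_const
      (Complex.continuous_re.comp (continuous_fst.inner continuous_snd))) hpos x

end Positive

end LinearPMap

section

open LinearPMap

variable {H : Type*} [NormedAddCommGroup H] [InnerProductSpace ℂ H] [CompleteSpace H]

theorem deficiencySpace_eq_bot_of_adjoint_le {A S : H →ₗ.[ℂ] H} (hle : A† ≤ S)
    (hS : S.IsFormalAdjoint S) {c : ℂ} (hc : c.im ≠ 0) : deficiencySpace A c = ⊥ := by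
  refine (Submodule.eq_bot_iff _).2 fun u hu => ?_
  have hAu : A† u = c • (u : H) := sub_eq_zero.1 (LinearMap.mem_ker.1 hu)
  have hSu : S ⟨u, hle.1 u.2⟩ = c • (u : H) := (hle.2 rfl).symm.trans hAu
  have h := hS ⟨u, hle.1 u.2⟩ ⟨u, hle.1 u.2⟩
  rw [hSu, inner_smul_left, inner_smul_right] at h
  have hconj : (starRingEnd ℂ) c ≠ c := fun h' => hc (Complex.conj_eq_iff_im.1 h')
  have h' : ((starRingEnd ℂ) c - c) * ⟪(u : H), (u : H)⟫_ℂ = 0 := by linear_combination h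
  have huu := (mul_eq_zero.1 h').resolve_left (sub_ne_zero.2 hconj)
  exact Subtype.ext (inner_self_eq_zero.1 huu)

theorem deficiencySpace_eq_bot_of_adjoint_closure_eq {A : H →ₗ.[ℂ] H}
    (hdense : Dense (A.domain : Set H)) (hsym : A.IsFormalAdjoint A)
    (hsa : A.closure† = A.closure) {c : ℂ} (hc : c.im ≠ 0) : deficiencySpace A c = ⊥ :=
  have hcl := hsym.isClosable hdense
  deficiencySpace_eq_bot_of_adjoint_le (hsa ▸ adjoint_le_adjoint_closure hdense hcl)
    ((hsym.closure hcl).symm.closure hcl) hc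

theorem exists_isSemibddSAExt_pair {A : H →ₗ.[ℂ] H} (hdense : Dense (A.domain : Set H))
    (hsym : A.IsFormalAdjoint A) (hpos : ∀ x : A.domain, 0 ≤ (⟪(x : H), A x⟫_ℂ).re) :
    ∃ S₁ S₂ : H →ₗ.[ℂ] H, IsSemibddSAExt A S₁ ∧ IsSemibddSAExt A S₂ ∧
      (S₁ = S₂ → A.closure† = A.closure) := by
  have hcl : A.IsClosable := hsym.isClosable hdense
  set T := A.closure
  have hTdense : Dense (T.domain : Set H) := dense_closure_domain hdense
  have hTsym : T.IsFormalAdjoint T := (hsym.closure hcl).symm.closure hcl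
  have hTpos := re_inner_closure_apply_nonneg hcl hpos
  have hd : ∀ {t : ℝ}, 0 < t → Disjoint T.domain (T.defectSpace t) :=
    disjoint_domain_defectSpace hTpos
  have hext : ∀ {t : ℝ} (ht : 0 < t), IsSemibddSAExt A (T.defectExtension t (hd ht)) :=
    fun ht => ⟨(le_closure A).trans le_defectExtension,
      adjoint_defectExtension hTdense hTsym hcl.closure_isClosed hTpos ht,
      _, neg_mul_norm_sq_le_re_inner_defectExtension hTpos ht.le⟩
  refine ⟨_, _, hext one_pos, hext two_pos, fun h => ?_⟩
  have hsa := adjoint_defectExtension hTdense hTsym hcl.closure_isClosed hTpos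
    (hd := hd two_pos) two_pos
  rwa [defectExtension_eq_self (defectSpace_eq_bot_of_defectExtension_eq hTpos zero_le_one
    one_lt_two h)] at hsa

end

theorem stmt18_general {H : Type*} [NormedAddCommGroup H] [InnerProductSpace ℂ H] [CompleteSpace H]
    (A : H →ₗ.[ℂ] H) (hdense : Dense (A.domain : Set H))
    (hsym : ∀ x y : A.domain, (inner ℂ (A x) (y : H) : ℂ) = inner ℂ (x : H) (A y))
    (hpos : ∀ x : A.domain, 0 ≤ (inner ℂ (x : H) (A x) : ℂ).re)
    (m : ℕ) (hm : 1 ≤ m)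
    (hdefPlus : Module.finrank ℂ (deficiencySpace A Complex.I) = m) :
    (∃ S₁ S₂ : H →ₗ.[ℂ] H, S₁ ≠ S₂ ∧ IsSemibddSAExt A S₁ ∧ IsSemibddSAExt A S₂) ∧
    (∀ B : H →ₗ.[ℂ] H, Dense (B.domain : Set H) →
      (∀ x y : B.domain, (inner ℂ (B x) (y : H) : ℂ) = inner ℂ (x : H) (B y)) →
      (∀ x : B.domain, 0 ≤ (inner ℂ (x : H) (B x) : ℂ).re) →
      (∃! S : H →ₗ.[ℂ] H, IsSemibddSAExt B S) →
      B.closure.adjoint = B.closure) := by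
  obtain ⟨S₁, S₂, h₁, h₂, hsa⟩ := exists_isSemibddSAExt_pair hdense hsym hpos
  refine ⟨⟨S₁, S₂, fun h => ?_, h₁, h₂⟩, fun B hBdense hBsym hBpos ⟨S, _, huniq⟩ => ?_⟩
  · have hbot := deficiencySpace_eq_bot_of_adjoint_closure_eq hdense hsym (hsa h)
      (c := Complex.I) (by simp)
    rw [hbot, finrank_bot] at hdefPlus
    omega
  · obtain ⟨T₁, T₂, hT₁, hT₂, hBsa⟩ := exists_isSemibddSAExt_pair hBdense hBsym hBpos
    exact hBsa ((huniq T₁ hT₁).trans (huniq T₂ hT₂).symm)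

/-- A positive symmetric densely defined operator with finite equal deficiency
indices `[m,m]`, `m ≥ 1`, has more than one semibounded self-adjoint extension;
consequently a positive symmetric operator with a unique semibounded
self-adjoint extension is essentially self-adjoint. -/
theorem stmt18 {H : Type*} [NormedAddCommGroup H] [InnerProductSpace ℂ H] [CompleteSpace H]
    (A : H →ₗ.[ℂ] H) (hdense : Dense (A.domain : Set H))
    (hsym : ∀ x y : A.domain, (inner ℂ (A x) (y : H) : ℂ) = inner ℂ (x : H) (A y))
    (hpos : ∀ x : A.domain, 0 ≤ (inner ℂ (x : H) (A x) : ℂ).re)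
    (m : ℕ) (hm : 1 ≤ m)
    (hdefPlus : Module.finrank ℂ (deficiencySpace A Complex.I) = m)
    (hdefMinus : Module.finrank ℂ (deficiencySpace A (-Complex.I)) = m) :
    (∃ S₁ S₂ : H →ₗ.[ℂ] H, S₁ ≠ S₂ ∧ IsSemibddSAExt A S₁ ∧ IsSemibddSAExt A S₂) ∧
    (∀ B : H →ₗ.[ℂ] H, Dense (B.domain : Set H) →
      (∀ x y : B.domain, (inner ℂ (B x) (y : H) : ℂ) = inner ℂ (x : H) (B y)) →
      (∀ x : B.domain, 0 ≤ (inner ℂ (x : H) (B x) : ℂ).re) →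
      (∃! S : H →ₗ.[ℂ] H, IsSemibddSAExt B S) →
      B.closure.adjoint = B.closure) :=
  stmt18_general A hdense hsym hpos m hm hdefPlus
end
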